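/- There is a permutation martingale d that succeeds on every π ∈ Π such that, for all but finitely many n, the restriction of π to {0,1}^n is a cyclic permutation (a single cycle of length 2^n). Consequently, the set {π ∈ Π : the restriction of π to {0,1}^n is a cyclic permutation for all but finitely many n} has measure 0 under μ. -/

import Mathlib

open Filter MeasureTheory

/-- Binary strings. -/
abbrev Str := List Bool

/-- The standard length-lexicographic enumeration `s_0 = λ, s_1 = 0, s_2 = 1, s_3 = 00, …`
of binary strings: `stdEnum n` is the binary representation of `n+1` with the leading 1 removed. -/
def stdEnum (n : ℕ) : Str := ((n + 1).bits.dropLast).reverse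

/-- The set Π of length-preserving permutations of `{0,1}*`. -/
structure LPPerm where
  toFun : Str → Str
  bij : Function.Bijective toFun
  lenPres : ∀ x, (toFun x).length = x.length

/-- `g` is a prefix partial permutation: a finite list of pairwise distinct binary strings
with `|g(s_i)| = |s_i|` for all `i < |g|`. -/
def IsPPP (g : List Str) : Prop :=
  g.Nodup ∧ ∀ i (h : i < g.length), (g.get ⟨i, h⟩).length = (stdEnum i).length

/-- The finite set of binary strings of length `n`. -/
def strsOfLen (n : ℕ) : Finset Str :=
  (Finset.univ : Finset (Fin n → Bool)).image List.ofFn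

/-- `free(g)`: strings of length `|s_{|g|}|` that do not occur as entries of `g`. -/
def freeSet (g : List Str) : Finset Str :=
  (strsOfLen (stdEnum g.length).length).filter (fun x => x ∉ g)

/-- A permutation martingale: nonnegative and satisfying the averaging condition
`d(g) = (1/|free(g)|) · Σ_{x ∈ free(g)} d((g,x))` on prefix partial permutations. -/
def IsPermMartingale (d : List Str → ℝ) : Prop :=
  (∀ g, 0 ≤ d g) ∧
    ∀ g, IsPPP g → d g = (1 / ((freeSet g).card : ℝ)) * ∑ x ∈ freeSet g, d (g ++ [x])

/-- The cylinder measure `μ(g) = (∏_{k<n} 1/(2^k)!) · (2^n − m)!/(2^n)!` where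
`2^n − 1 ≤ |g| < 2^{n+1} − 1` (so `n = log2(|g|+1)`) and `m = |g| − (2^n − 1)`. -/
noncomputable def muPPP (g : List Str) : ℝ :=
  (∏ k ∈ Finset.range (Nat.log2 (g.length + 1)), (1 : ℝ) / (Nat.factorial (2 ^ k))) *
      (Nat.factorial
        (2 ^ Nat.log2 (g.length + 1) - (g.length - (2 ^ Nat.log2 (g.length + 1) - 1)))) /
      (Nat.factorial (2 ^ Nat.log2 (g.length + 1)))

/-- The cylinder of all permutations extending the prefix partial permutation `g`. -/
def cyl (g : List Str) : Set LPPerm :=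
  {π | ∀ i (h : i < g.length), π.toFun (stdEnum i) = g.get ⟨i, h⟩}

/-- The σ-algebra `F_Π` generated by the cylinders. -/
instance : MeasurableSpace LPPerm :=
  MeasurableSpace.generateFrom {S | ∃ g, IsPPP g ∧ S = cyl g}

/-- `π↾N = [π(s_0), …, π(s_{N−1})]`. -/
def LPPerm.restrict (π : LPPerm) (N : ℕ) : List Str :=
  (List.range N).map (fun i => π.toFun (stdEnum i))

/-- `d` succeeds on `π`: `limsup_{N→∞} d(π↾N) = ∞`. -/
def succeedsOn (d : List Str → ℝ) (π : LPPerm) : Prop :=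
  ∀ C : ℝ, ∃ᶠ N in atTop, C < d (π.restrict N)

/-- The restriction of `π` to `{0,1}^n` is a cyclic permutation (a single cycle of
length `2^n`): every length-`n` string is reachable from every other by iterating `π`. -/
def IsCyclicOnLen (π : LPPerm) (n : ℕ) : Prop :=
  ∀ x : Str, x.length = n → ∀ y : Str, y.length = n → ∃ j : ℕ, (π.toFun)^[j] x = y


/-! ### bits and encoding -/

def valLE (l : List Bool) : ℕ := l.foldr (fun b a => 2*a + cond b 1 0) 0

lemma valLE_cons (b : Bool) (l : List Bool) : valLE (b :: l) = 2 * valLE l + cond b 1 0 := rfl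

lemma valLE_lt (l : List Bool) : valLE l < 2 ^ l.length := by
  induction l with
  | nil => simp [valLE]
  | cons b l ih =>
    rw [valLE_cons]
    have : cond b 1 0 ≤ 1 := by cases b <;> simp
    simp only [List.length_cons, pow_succ]
    omega

lemma valLE_append_true (l : List Bool) :
    valLE (l ++ [true]) = valLE l + 2 ^ l.length := by
  induction l with
  | nil => simp [valLE]
  | cons b l ih =>
    simp only [List.cons_append, valLE_cons, ih, List.length_cons, pow_succ]
    ring

lemma valLE_bits (n : ℕ) : valLE n.bits = n := by
  induction n using Nat.strong_induction_on with
  | _ n ih =>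
    rcases Nat.eq_zero_or_pos n with h0 | h0
    · simp [h0, Nat.zero_bits, valLE]
    rcases Nat.even_or_odd n with ⟨m, hm⟩ | ⟨m, hm⟩
    · have hm0 : m ≠ 0 := by omega
      have : n.bits = false :: m.bits := by
        rw [hm, show m + m = 2 * m by ring, Nat.bit0_bits _ hm0]
      rw [this, valLE_cons, ih m (by omega)]; simp; omega
    · have : n.bits = true :: m.bits := by rw [hm, Nat.bit1_bits]
      rw [this, valLE_cons, ih m (by omega)]; simp; omega

lemma bits_valLE (l : List Bool) : (valLE (l ++ [true])).bits = l ++ [true] := by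
  induction l with
  | nil => simp [valLE, Nat.one_bits]
  | cons b l ih =>
    have hpos : 0 < valLE (l ++ [true]) := by
      rw [valLE_append_true]; positivity
    rw [List.cons_append, valLE_cons]
    cases b
    · simp only [cond]
      rw [add_zero, Nat.bit0_bits _ hpos.ne', ih]
    · simp only [cond]
      rw [Nat.bit1_bits, ih]

def encode (x : Str) : ℕ := valLE (x.reverse ++ [true]) - 1

lemma encode_add_one (x : Str) : encode x + 1 = valLE (x.reverse ++ [true]) := by
  have : 0 < valLE (x.reverse ++ [true]) := by rw [valLE_append_true]; positivity
  unfold encode; omega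

lemma bits_encode (x : Str) : (encode x + 1).bits = x.reverse ++ [true] := by
  rw [encode_add_one, bits_valLE]

lemma stdEnum_encode (x : Str) : stdEnum (encode x) = x := by
  unfold stdEnum
  rw [bits_encode, List.dropLast_concat, List.reverse_reverse]

lemma getLast_bits (n : ℕ) (hn : n ≠ 0) (h : n.bits ≠ []) : n.bits.getLast h = true := by
  induction n using Nat.strong_induction_on with
  | _ n ih =>
    rcases Nat.even_or_odd n with ⟨m, hm⟩ | ⟨m, hm⟩
    · have hm0 : m ≠ 0 := by omega
      have hb : n.bits = false :: m.bits := by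
        rw [hm, show m + m = 2 * m by ring, Nat.bit0_bits _ hm0]
      have hmb : m.bits ≠ [] := by
        intro hc
        have := valLE_bits m; rw [hc] at this; simp [valLE] at this; exact hm0 this.symm
      rw [List.getLast_congr _ (by simp) hb, List.getLast_cons hmb]
      exact ih m (by omega) hm0 hmb
    · have hb : n.bits = true :: m.bits := by rw [hm, Nat.bit1_bits]
      rcases Nat.eq_zero_or_pos m with h0 | h0
      · subst h0; rw [Nat.zero_bits] at hb
        rw [List.getLast_congr _ (by simp) hb]; simp
      · have hmb : m.bits ≠ [] := by
          intro hc
          have := valLE_bits m; rw [hc] at this; simp [valLE] at this; omega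
        rw [List.getLast_congr _ (by simp) hb, List.getLast_cons hmb]
        exact ih m (by omega) (by omega) hmb

lemma bits_eq_dropLast_concat (n : ℕ) (hn : n ≠ 0) :
    n.bits = n.bits.dropLast ++ [true] := by
  have h : n.bits ≠ [] := by
    intro hc; have := valLE_bits n; rw [hc] at this; simp [valLE] at this; omega
  conv_lhs => rw [← List.dropLast_append_getLast h]
  rw [getLast_bits n hn h]

lemma encode_stdEnum (i : ℕ) : encode (stdEnum i) = i := by
  have h1 : encode (stdEnum i) + 1 = valLE ((i+1).bits.dropLast ++ [true]) := by
    rw [encode_add_one]; unfold stdEnum; rw [List.reverse_reverse]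
  rw [← bits_eq_dropLast_concat (i+1) (by omega), valLE_bits] at h1
  omega

lemma stdEnum_injective : Function.Injective stdEnum := by
  intro a b h
  have := congrArg encode h
  rwa [encode_stdEnum, encode_stdEnum] at this

lemma encode_bounds (x : Str) : 2 ^ x.length ≤ encode x + 1 ∧ encode x + 1 < 2 ^ (x.length + 1) := by
  rw [encode_add_one, valLE_append_true]
  have h1 := valLE_lt x.reverse
  rw [List.length_reverse] at *
  constructor
  · omega
  · have : (2:ℕ) ^ (x.length + 1) = 2 ^ x.length + 2 ^ x.length := by ring
    omega

lemma log2_eq {n x : ℕ} (h1 : 2 ^ n ≤ x) (h2 : x < 2 ^ (n+1)) : Nat.log2 x = n := by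
  rw [Nat.log2_eq_log_two]
  exact Nat.log_eq_of_pow_le_of_lt_pow h1 h2

lemma length_stdEnum (i : ℕ) : (stdEnum i).length = Nat.log2 (i + 1) := by
  have h := encode_bounds (stdEnum i)
  rw [encode_stdEnum] at h
  exact (log2_eq h.1 h.2).symm

/-! ### levels -/

def levIdx (n : ℕ) : Finset ℕ := Finset.Ico (2^n - 1) (2^(n+1) - 1)

lemma mem_levIdx {n i : ℕ} : i ∈ levIdx n ↔ 2^n - 1 ≤ i ∧ i < 2^(n+1) - 1 := Finset.mem_Ico

lemma two_pow_pos' (n : ℕ) : 1 ≤ 2^n := Nat.one_le_two_pow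

lemma encode_mem_levIdx {x : Str} {n : ℕ} (h : x.length = n) : encode x ∈ levIdx n := by
  have hb := encode_bounds x
  rw [h] at hb
  rw [mem_levIdx]
  omega

lemma stdEnum_length_of_mem {i n : ℕ} (h : i ∈ levIdx n) : (stdEnum i).length = n := by
  rw [mem_levIdx] at h
  have h2 : (2:ℕ)^n ≥ 1 := two_pow_pos' n
  rw [length_stdEnum]
  exact log2_eq (by omega) (by omega)

lemma log2_of_mem_levIdx {i n : ℕ} (h : i ∈ levIdx n) : Nat.log2 (i+1) = n := by
  rw [← length_stdEnum]; exact stdEnum_length_of_mem h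

lemma mem_levIdx_of_length {i n : ℕ} (h : (stdEnum i).length = n) : i ∈ levIdx n := by
  have := encode_mem_levIdx h
  rwa [encode_stdEnum] at this

lemma mem_strsOfLen {x : Str} {n : ℕ} : x ∈ strsOfLen n ↔ x.length = n := by
  constructor
  · intro h
    simp only [strsOfLen, Finset.mem_image] at h
    obtain ⟨f, _, rfl⟩ := h
    simp
  · intro h
    simp only [strsOfLen, Finset.mem_image]
    subst h
    exact ⟨fun i => x.get ⟨i, i.isLt⟩, Finset.mem_univ _, by simp [List.ofFn_get]⟩

lemma card_strsOfLen (n : ℕ) : (strsOfLen n).card = 2^n := by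
  rw [strsOfLen, Finset.card_image_of_injective _ (List.ofFn_injective)]
  simp [Finset.card_univ]

/-! ### the martingale ingredients -/

noncomputable def levF (n : ℕ) (h : List Str) (i : ℕ) : ℕ :=
  if i ∈ levIdx n ∧ encode (h.getD i []) ∈ levIdx n then encode (h.getD i []) else i

def cycLev (n : ℕ) (h : List Str) : Prop :=
  ∀ i ∈ levIdx n, ∀ i' ∈ levIdx n, ∃ j, (levF n h)^[j] i = i'

def sib (n : ℕ) (h : List Str) : List Str :=
  (h.set (2^(n+1)-3) (h.getD (2^(n+1)-2) [])).set (2^(n+1)-2) (h.getD (2^(n+1)-3) [])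

open scoped Classical in
noncomputable def fFac (n : ℕ) (h : List Str) : ℝ :=
  if cycLev n h ∧ ¬ cycLev n (sib n h) then 3/2
  else if cycLev n (sib n h) ∧ ¬ cycLev n h then 1/2 else 1

noncomputable def wFac (h : List Str) : ℝ :=
  if h.length + 2 = 2^(Nat.log2 (h.length+1)+1) then
    fFac (Nat.log2 (h.length+1)) (h ++ (freeSet h).toList) else 1

noncomputable def dmart (h : List Str) : ℝ :=
  (∏ n' ∈ Finset.Ico 1 (Nat.log2 (h.length+1)), fFac n' h) * wFac h

/-! ### locality -/

lemma levF_congr {n : ℕ} {h h' : List Str}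
    (he : ∀ i ∈ levIdx n, h.getD i [] = h'.getD i []) : levF n h = levF n h' := by
  funext i
  unfold levF
  by_cases hi : i ∈ levIdx n
  · rw [he i hi]
  · simp [hi]

lemma cycLev_congr {n : ℕ} {h h' : List Str}
    (he : ∀ i ∈ levIdx n, h.getD i [] = h'.getD i []) : cycLev n h ↔ cycLev n h' := by
  unfold cycLev
  rw [levF_congr he]

lemma getD_append' {h t : List Str} {i : ℕ} (hi : i < h.length) :
    (h ++ t).getD i [] = h.getD i [] := List.getD_append _ _ _ _ hi

lemma cycLev_append {n : ℕ} {h t : List Str} (hl : 2^(n+1) - 1 ≤ h.length) :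
    cycLev n (h ++ t) ↔ cycLev n h := by
  apply cycLev_congr
  intro i hi
  rw [mem_levIdx] at hi
  exact getD_append' (by omega)

lemma set_getD_self (l : List Str) (i : ℕ) : l.set i (l.getD i []) = l := by
  by_cases hi : i < l.length
  · apply List.ext_getElem (by simp)
    intro j hj hj2
    rw [List.getElem_set]
    split
    · next hij => subst hij; exact (List.getD_eq_getElem l [] hi).symm ▸ rfl
    · rfl
  · exact List.set_eq_of_length_le (by omega)

lemma length_sib (n : ℕ) (h : List Str) : (sib n h).length = h.length := by simp [sib]

lemma sib_zero (h : List Str) : sib 0 h = h := by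
  show (h.set 0 (h.getD 0 [])).set 0 (h.getD 0 []) = h
  rw [List.set_set, set_getD_self]

lemma getD_sib {n : ℕ} (hn : 1 ≤ n) (h : List Str) (hq : 2^(n+1)-2 < h.length) (i : ℕ) :
    (sib n h).getD i [] =
      if i = 2^(n+1)-3 then h.getD (2^(n+1)-2) []
      else if i = 2^(n+1)-2 then h.getD (2^(n+1)-3) []
      else h.getD i [] := by
  have h4 : 4 ≤ 2^(n+1) := by
    calc (4:ℕ) = 2^2 := rfl
    _ ≤ 2^(n+1) := Nat.pow_le_pow_right (by norm_num) (by omega)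
  set q1 := 2^(n+1)-3 with hq1
  set q2 := 2^(n+1)-2 with hq2
  have hq12 : q2 = q1 + 1 := by omega
  have hq1l : q1 < h.length := by omega
  have hq2l : q2 < h.length := by omega
  by_cases hil : i < h.length
  · have hil' : i < ((h.set q1 (h.getD q2 [])).set q2 (h.getD q1 [])).length := by simpa
    rw [sib, List.getD_eq_getElem _ _ hil', List.getElem_set, List.getElem_set]
    by_cases h2 : i = q2
    · rw [if_pos h2.symm, if_neg (by omega), if_pos h2]
    · rw [if_neg (fun hc => h2 hc.symm), if_neg h2]
      by_cases h1 : i = q1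
      · rw [if_pos h1.symm, if_pos h1, List.getD_eq_getElem _ _ hq2l]
      · rw [if_neg (fun hc => h1 hc.symm), if_neg h1, List.getD_eq_getElem _ _ hil]
  · rw [if_neg (by omega), if_neg (by omega), List.getD_eq_default _ _ (by simpa [sib] using not_lt.mp hil),
      List.getD_eq_default _ _ (by omega)]

lemma q1_mem_levIdx {n : ℕ} (hn : 1 ≤ n) : 2^(n+1)-3 ∈ levIdx n ∧ 2^(n+1)-2 ∈ levIdx n := by
  have h1 : 2 ≤ 2^n := by
    calc (2:ℕ) = 2^1 := rfl
    _ ≤ 2^n := Nat.pow_le_pow_right (by norm_num) hn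
  have h2 : 2^(n+1) = 2 * 2^n := by ring
  rw [mem_levIdx, mem_levIdx]
  omega

lemma cycLev_sib_append {n : ℕ} {h t : List Str} (hl : 2^(n+1) - 1 ≤ h.length) :
    cycLev n (sib n (h ++ t)) ↔ cycLev n (sib n h) := by
  rcases Nat.eq_zero_or_pos n with rfl | hn
  · rw [sib_zero, sib_zero]; exact cycLev_append hl
  · apply cycLev_congr
    intro i hi
    have hiq : i < 2^(n+1) - 1 := (mem_levIdx.mp hi).2
    have hlen : 2^(n+1) - 2 < h.length := by omega
    have hlen2 : 2^(n+1) - 2 < (h ++ t).length := by simp; omega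
    rw [getD_sib hn _ hlen2, getD_sib hn _ hlen]
    split
    · exact getD_append' (by omega)
    · split
      · exact getD_append' (by omega)
      · exact getD_append' (by omega)

lemma fFac_append {n : ℕ} {h t : List Str} (hl : 2^(n+1) - 1 ≤ h.length) :
    fFac n (h ++ t) = fFac n h := by
  unfold fFac
  rw [cycLev_append hl]
  have := cycLev_sib_append (t := t) hl
  rw [this]

lemma fFac_ge_half (n : ℕ) (h : List Str) : 1/2 ≤ fFac n h := by
  unfold fFac; split; · norm_num
  split; · norm_num
  · norm_num

lemma fFac_nonneg (n : ℕ) (h : List Str) : 0 ≤ fFac n h :=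
  le_trans (by norm_num) (fFac_ge_half n h)

lemma fFac_eq_3half {n : ℕ} {h : List Str} (h1 : cycLev n h) (h2 : ¬ cycLev n (sib n h)) :
    fFac n h = 3/2 := by
  unfold fFac; rw [if_pos ⟨h1, h2⟩]

lemma wFac_nonneg (h : List Str) : 0 ≤ wFac h := by
  unfold wFac; split
  · exact fFac_nonneg _ _
  · norm_num

lemma dmart_nonneg (h : List Str) : 0 ≤ dmart h :=
  mul_nonneg (Finset.prod_nonneg fun i _ => fFac_nonneg _ _) (wFac_nonneg h)

/-! ### freeSet cardinality -/

lemma mem_freeSet {g : List Str} {x : Str} :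
    x ∈ freeSet g ↔ x.length = (stdEnum g.length).length ∧ x ∉ g := by
  simp [freeSet, Finset.mem_filter, mem_strsOfLen, and_comm]

lemma card_freeSet {g : List Str} (hg : IsPPP g) {n : ℕ}
    (h1 : 2^n - 1 ≤ g.length) (h2 : g.length < 2^(n+1) - 1) :
    (freeSet g).card = 2^(n+1) - 1 - g.length := by
  have hp : (1:ℕ) ≤ 2^n := two_pow_pos' n
  have hp2 : (2:ℕ)^(n+1) = 2 * 2^n := by ring
  have hn : (stdEnum g.length).length = n := stdEnum_length_of_mem (mem_levIdx.mpr ⟨h1, h2⟩)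
  have hkey : ((strsOfLen n).filter (fun x => x ∈ g)).card = g.length - (2^n - 1) := by
    rw [← Nat.card_Ico (2^n - 1) g.length]
    refine (Finset.card_bij (fun a _ => g.getD a []) ?_ ?_ ?_).symm
    · intro a ha
      rw [Finset.mem_Ico] at ha
      have hal : a < g.length := ha.2
      rw [Finset.mem_filter, List.getD_eq_getElem _ _ hal]
      constructor
      · rw [mem_strsOfLen]
        have := hg.2 a hal
        rw [List.get_eq_getElem] at this
        rw [this]
        exact stdEnum_length_of_mem (mem_levIdx.mpr ⟨ha.1, by omega⟩)
      · exact List.getElem_mem _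
    · intro a ha b hb hab
      rw [Finset.mem_Ico] at ha hb
      rw [List.getD_eq_getElem _ _ ha.2, List.getD_eq_getElem _ _ hb.2] at hab
      exact hg.1.getElem_inj_iff.mp hab
    · intro x hx
      rw [Finset.mem_filter, mem_strsOfLen] at hx
      obtain ⟨a, hal, hax⟩ := List.mem_iff_getElem.mp hx.2
      refine ⟨a, ?_, by rw [List.getD_eq_getElem _ _ hal, hax]⟩
      rw [Finset.mem_Ico]
      refine ⟨?_, hal⟩
      have hlen : (stdEnum a).length = n := by
        have := hg.2 a hal
        rw [List.get_eq_getElem, hax] at this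
        rw [← this, hx.1]
      have := mem_levIdx.mp (mem_levIdx_of_length hlen)
      omega
  have htot := Finset.card_filter_add_card_filter_not
    (s := strsOfLen n) (p := fun x => x ∉ g)
  simp only [not_not] at htot
  rw [card_strsOfLen] at htot
  have hfg : freeSet g = (strsOfLen n).filter (fun x => x ∉ g) := by
    rw [freeSet, hn]
  rw [hfg]
  omega

/-! ### averaging -/

lemma log2_bounds (N : ℕ) : 2^(Nat.log2 (N+1)) ≤ N+1 ∧ N+1 < 2^(Nat.log2 (N+1)+1) := by
  rw [Nat.log2_eq_log_two]
  exact ⟨Nat.pow_log_le_self 2 (by omega), Nat.lt_pow_succ_log_self (by norm_num) _⟩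

lemma prod_fFac_append {n : ℕ} (g t : List Str) (h : 2^n - 1 ≤ g.length) :
    ∏ n' ∈ Finset.Ico 1 n, fFac n' (g ++ t) = ∏ n' ∈ Finset.Ico 1 n, fFac n' g := by
  refine Finset.prod_congr rfl fun n' hn' => fFac_append ?_
  have hlt : n' < n := (Finset.mem_Ico.mp hn').2
  have : (2:ℕ)^(n'+1) ≤ 2^n := Nat.pow_le_pow_right (by norm_num) (by omega)
  omega

lemma fFac_zero (h : List Str) : fFac 0 h = 1 := by
  unfold fFac
  rw [sib_zero]
  simp

lemma sib_last_two {n : ℕ} (g : List Str) (x y : Str) (hg : g.length = 2^(n+1) - 3)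
    (hn : 1 ≤ n) : sib n (g ++ [x, y]) = g ++ [y, x] := by
  have h4 : 4 ≤ 2^(n+1) := by
    calc (4:ℕ) = 2^2 := rfl
    _ ≤ 2^(n+1) := Nat.pow_le_pow_right (by norm_num) (by omega)
  have hq1 : 2^(n+1) - 3 = g.length := hg.symm
  have hq2 : 2^(n+1) - 2 = g.length + 1 := by omega
  have hgx : (g ++ [x, y]).getD (g.length) [] = x := by
    rw [List.getD_append_right _ _ _ _ (le_refl _), Nat.sub_self]; rfl
  have hgy : (g ++ [x, y]).getD (g.length + 1) [] = y := by
    rw [List.getD_append_right _ _ _ _ (by omega)]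
    simp
  unfold sib
  rw [hq1, hq2, hgx, hgy, List.set_append, if_neg (by omega), Nat.sub_self,
    List.set_append, if_neg (by omega)]
  congr 1
  simp

lemma fFac_pair_sum {n : ℕ} (hn : 1 ≤ n) {g : List Str} {x y : Str}
    (hg : g.length = 2^(n+1) - 3) :
    fFac n (g ++ [x, y]) + fFac n (g ++ [y, x]) = 2 := by
  classical
  have hAB : sib n (g ++ [x, y]) = g ++ [y, x] := sib_last_two g x y hg hn
  have hBA : sib n (g ++ [y, x]) = g ++ [x, y] := sib_last_two g y x hg hn
  have eA : fFac n (g ++ [x, y]) =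
      if cycLev n (g ++ [x, y]) ∧ ¬ cycLev n (g ++ [y, x]) then 3/2
      else if cycLev n (g ++ [y, x]) ∧ ¬ cycLev n (g ++ [x, y]) then 1/2 else 1 := by
    unfold fFac; rw [hAB]
  have eB : fFac n (g ++ [y, x]) =
      if cycLev n (g ++ [y, x]) ∧ ¬ cycLev n (g ++ [x, y]) then 3/2
      else if cycLev n (g ++ [x, y]) ∧ ¬ cycLev n (g ++ [y, x]) then 1/2 else 1 := by
    unfold fFac; rw [hBA]
  rw [eA, eB]
  by_cases hA : cycLev n (g ++ [x, y]) <;> by_cases hB : cycLev n (g ++ [y, x]) <;>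
    simp [hA, hB] <;> norm_num

theorem dmart_avg (g : List Str) (hg : IsPPP g) :
    dmart g = (1 / ((freeSet g).card : ℝ)) * ∑ x ∈ freeSet g, dmart (g ++ [x]) := by
  classical
  obtain ⟨n, hn⟩ : ∃ m, Nat.log2 (g.length + 1) = m := ⟨_, rfl⟩
  obtain ⟨hb1, hb2⟩ := log2_bounds g.length
  rw [hn] at hb1 hb2
  have hpow : (1:ℕ) ≤ 2^n := two_pow_pos' n
  have hpow2 : (2:ℕ)^(n+1) = 2 * 2^n := by ring
  have hpow4 : (2:ℕ)^(n+1+1) = 4 * 2^n := by ring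
  have hN1 : 2^n - 1 ≤ g.length := by omega
  have hN2 : g.length < 2^(n+1) - 1 := by omega
  have hcard : (freeSet g).card = 2^(n+1) - 1 - g.length := card_freeSet hg hN1 hN2
  have hlenx : ∀ x : Str, (g ++ [x]).length = g.length + 1 := by intro x; simp
  by_cases hc1 : g.length = 2^(n+1) - 2
  · -- r = 1 : the forced completion
    obtain ⟨x, hx⟩ := Finset.card_eq_one.mp (by rw [hcard]; omega)
    rw [hx, Finset.sum_singleton, Finset.card_singleton]
    norm_num
    -- show dmart g = dmart (g ++ [x])
    have hw : wFac g = fFac n (g ++ [x]) := by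
      unfold wFac
      rw [hn, if_pos (by omega), hx, Finset.toList_singleton]
    have hlog2' : Nat.log2 (g.length + 1 + 1) = n+1 := by
      apply log2_eq <;> omega
    have hwx : wFac (g ++ [x]) = 1 := by
      unfold wFac
      rw [hlenx x, hlog2', if_neg (by omega)]
    rcases Nat.eq_zero_or_pos n with hn0 | hn1
    · -- n = 0 : g = [], x = []
      have hpone : (2:ℕ)^(0+1) = 2 := rfl
      rw [hn0] at hc1
      have hc0 : g.length = 0 := by omega
      have hgnil : g = [] := List.length_eq_zero_iff.mp hc0
      subst hgnil
      have hse : stdEnum 0 = [] := by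
        show ((1:ℕ).bits.dropLast).reverse = []
        rw [Nat.one_bits]; rfl
      have hxnil : x = [] := by
        have hxm := mem_freeSet.mp (hx ▸ Finset.mem_singleton_self x)
        simp only [List.length_nil, hse] at hxm
        exact List.length_eq_zero_iff.mp hxm.1
      subst hxnil
      have hl1 : Nat.log2 (0+1) = 0 := by apply log2_eq <;> norm_num
      have hl2 : Nat.log2 (1+1) = 1 := by apply log2_eq <;> norm_num
      have hd1 : dmart ([] : List Str) = 1 := by
        rw [dmart]
        simp only [List.length_nil]
        rw [hl1]
        have hw0 : wFac ([] : List Str) = 1 := by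
          unfold wFac
          simp only [List.length_nil]
          rw [hl1, if_pos (by norm_num), fFac_zero]
        rw [hw0]
        simp
      have hd2 : dmart [([] : Str)] = 1 := by
        rw [dmart]
        simp only [List.length_singleton]
        rw [hl2]
        have hw1 : wFac [([] : Str)] = 1 := by
          unfold wFac
          simp only [List.length_singleton]
          rw [hl2, if_neg (by norm_num)]
        rw [hw1]
        simp
      simp only [List.nil_append]
      rw [hd1, hd2]
    · rw [dmart, dmart, hlenx x, hlog2', hn, hwx, hw, mul_one,
        Finset.prod_Ico_succ_top hn1, prod_fFac_append g [x] hN1]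
  by_cases hc2 : g.length = 2^(n+1) - 3
  · -- r = 2 : the sibling bet
    have hn1 : 1 ≤ n := by
      rcases Nat.eq_zero_or_pos n with h0 | h1
      · rw [h0] at hc1 hc2; norm_num at hc1 hc2; exact absurd hc2 hc1
      · exact h1
    obtain ⟨x, y, hxy, hset⟩ := Finset.card_eq_two.mp (by rw [hcard]; omega)
    have hlog2c : Nat.log2 (g.length + 1 + 1) = n := by apply log2_eq <;> omega
    have child : ∀ a b : Str, freeSet g = {a, b} → a ≠ b →
        dmart (g ++ [a]) = (∏ n' ∈ Finset.Ico 1 n, fFac n' g) * fFac n (g ++ [a, b]) := by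
      intro a b hset' hab
      have hlev : (stdEnum (g.length + 1)).length = n :=
        stdEnum_length_of_mem (mem_levIdx.mpr ⟨by omega, by omega⟩)
      have hlev0 : (stdEnum g.length).length = n :=
        stdEnum_length_of_mem (mem_levIdx.mpr ⟨hN1, hN2⟩)
      have hfree : freeSet (g ++ [a]) = {b} := by
        ext z
        rw [mem_freeSet, hlenx a, hlev]
        constructor
        · rintro ⟨hzl, hzg⟩
          simp only [List.mem_append, List.mem_singleton, not_or] at hzg
          have hzf : z ∈ freeSet g := mem_freeSet.mpr ⟨by rw [hlev0]; exact hzl, hzg.1⟩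
          rw [hset'] at hzf
          simp only [Finset.mem_insert, Finset.mem_singleton] at hzf
          rcases hzf with rfl | rfl
          · exact absurd rfl hzg.2
          · simp
        · intro hz
          rw [Finset.mem_singleton] at hz
          subst hz
          have hzf : z ∈ freeSet g := by rw [hset']; simp
          rw [mem_freeSet] at hzf
          refine ⟨by rw [hlev0] at hzf; exact hzf.1, ?_⟩
          simp only [List.mem_append, List.mem_singleton, not_or]
          exact ⟨hzf.2, fun hc => hab hc.symm⟩
      have hwa : wFac (g ++ [a]) = fFac n (g ++ [a, b]) := by
        unfold wFac
        rw [hlenx a, hlog2c, if_pos (by omega), hfree, Finset.toList_singleton,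
          List.append_assoc]
        rfl
      rw [dmart, hlenx a, hlog2c, hwa, prod_fFac_append g [a] hN1]
    have hset2 : freeSet g = {y, x} := by rw [hset]; exact Finset.pair_comm x y
    rw [hset, Finset.sum_pair hxy, Finset.card_pair hxy,
      child x y hset hxy, child y x hset2 hxy.symm]
    have hkey := fFac_pair_sum hn1 (g := g) (x := x) (y := y) hc2
    have hw : wFac g = 1 := by
      unfold wFac
      rw [hn, if_neg (by omega)]
    rw [dmart, hn, hw, mul_one]
    set P := ∏ n' ∈ Finset.Ico 1 n, fFac n' g
    have hPP : P * fFac n (g ++ [x, y]) + P * fFac n (g ++ [y, x]) = P * 2 := by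
      rw [← mul_add, hkey]
    rw [hPP]
    push_cast
    ring
  · -- r ≥ 3 : no bet
    have hlog2c : Nat.log2 (g.length + 1 + 1) = n := by apply log2_eq <;> omega
    have child : ∀ x ∈ freeSet g, dmart (g ++ [x]) = dmart g := by
      intro x _
      have hwx : wFac (g ++ [x]) = 1 := by
        unfold wFac
        rw [hlenx x, hlog2c, if_neg (by omega)]
      have hw : wFac g = 1 := by
        unfold wFac
        rw [hn, if_neg (by omega)]
      rw [dmart, dmart, hlenx x, hlog2c, hn, hwx, hw,
        prod_fFac_append g [x] hN1]
    rw [Finset.sum_congr rfl child, Finset.sum_const, nsmul_eq_mul]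
    have hr0 : ((freeSet g).card : ℝ) ≠ 0 := by
      rw [hcard]
      have : 2^(n+1) - 1 - g.length ≥ 1 := by omega
      positivity
    field_simp

/-! ### the parity argument -/

lemma perm_trans_cycle {α : Type} [Fintype α] [DecidableEq α] (hcard : 2 ≤ Fintype.card α)
    (σ : Equiv.Perm α) (h : ∀ x y : α, ∃ j : ℕ, σ^[j] x = y) :
    σ.IsCycle ∧ σ.support = Finset.univ := by
  have hnofix : ∀ x : α, σ x ≠ x := by
    intro x hx
    obtain ⟨y, hy⟩ := Fintype.exists_ne_of_one_lt_card (by omega) x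
    obtain ⟨j, hj⟩ := h x y
    have hfix : σ^[j] x = x := Function.iterate_fixed hx j
    exact hy (by rw [← hj, hfix])
  obtain ⟨x0⟩ : Nonempty α := Fintype.card_pos_iff.mp (by omega)
  refine ⟨⟨x0, hnofix x0, fun y _ => ?_⟩, ?_⟩
  · obtain ⟨j, hj⟩ := h x0 y
    refine ⟨(j : ℤ), ?_⟩
    rw [zpow_natCast]
    rw [Equiv.Perm.iterate_eq_pow] at hj
    exact hj
  · ext y
    simp [Equiv.Perm.mem_support, hnofix y]

lemma sign_contra {α : Type} [Fintype α] [DecidableEq α] (hcard : 2 ≤ Fintype.card α)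
    (σ : Equiv.Perm α) (a b : α) (hab : a ≠ b)
    (h1 : ∀ x y : α, ∃ j : ℕ, σ^[j] x = y)
    (h2 : ∀ x y : α, ∃ j : ℕ, ((Equiv.swap a b) * σ)^[j] x = y) : False := by
  obtain ⟨hc1, hs1⟩ := perm_trans_cycle hcard σ h1
  obtain ⟨hc2, hs2⟩ := perm_trans_cycle hcard _ h2
  have e1 := hc1.sign
  have e2 := hc2.sign
  rw [hs1] at e1
  rw [hs2] at e2
  rw [Equiv.Perm.sign_mul, Equiv.Perm.sign_swap hab, e1] at e2
  have e3 : (-1 : ℤˣ) * (-(-1) ^ (Finset.univ.card (α := α))) =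
      1 * (-(-1) ^ (Finset.univ.card (α := α))) := by rw [one_mul]; exact e2
  have : (-1 : ℤˣ) = 1 := mul_right_cancel e3
  exact absurd this (by decide)

lemma encode_injective : Function.Injective encode := by
  intro x y h
  have := congrArg stdEnum h
  rwa [stdEnum_encode, stdEnum_encode] at this

lemma card_levIdx (n : ℕ) : (levIdx n).card = 2^n := by
  have h1 : (1:ℕ) ≤ 2^n := two_pow_pos' n
  have h2 : (2:ℕ)^(n+1) = 2 * 2^n := by ring
  rw [levIdx, Nat.card_Ico]
  omega

lemma levF_iterate {k : ℕ} {h' : List Str} {σ : Equiv.Perm {i // i ∈ levIdx k}}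
    (hσ : ∀ i : {i // i ∈ levIdx k}, (σ i).1 = encode (h'.getD i.1 [])) :
    ∀ (j : ℕ) (i : {i // i ∈ levIdx k}), (levF k h')^[j] i.1 = (σ^[j] i).1 := by
  intro j
  induction j with
  | zero => simp
  | succ j ih =>
    intro i
    rw [Function.iterate_succ_apply', Function.iterate_succ_apply', ih i]
    set z := σ^[j] i with hz
    show levF k h' z.1 = (σ z).1
    have hmem : encode (h'.getD z.1 []) ∈ levIdx k := hσ z ▸ (σ z).2
    rw [hσ z]
    unfold levF
    rw [if_pos ⟨z.2, hmem⟩]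

lemma cycLev_iff_trans {k : ℕ} {h' : List Str} {σ : Equiv.Perm {i // i ∈ levIdx k}}
    (hσ : ∀ i : {i // i ∈ levIdx k}, (σ i).1 = encode (h'.getD i.1 []))
    (hc : cycLev k h') : ∀ x y : {i // i ∈ levIdx k}, ∃ j : ℕ, σ^[j] x = y := by
  intro x y
  obtain ⟨j, hj⟩ := hc x.1 x.2 y.1 y.2
  exact ⟨j, Subtype.ext (by rw [← levF_iterate hσ j x, hj])⟩

lemma not_cycLev_both {k : ℕ} (hk : 1 ≤ k) {g : List Str}
    (hl : ∀ i ∈ levIdx k, (g.getD i []).length = k)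
    (hinj : ∀ i ∈ levIdx k, ∀ i' ∈ levIdx k, g.getD i [] = g.getD i' [] → i = i')
    (hglen : 2^(k+1) - 2 < g.length)
    (hcyc : cycLev k g) : ¬ cycLev k (sib k g) := by
  intro hcyc'
  classical
  have h4 : 4 ≤ 2^(k+1) := by
    calc (4:ℕ) = 2^2 := rfl
    _ ≤ 2^(k+1) := Nat.pow_le_pow_right (by norm_num) (by omega)
  obtain ⟨hq1m, hq2m⟩ := q1_mem_levIdx hk
  have hq12 : 2^(k+1)-3 ≠ 2^(k+1)-2 := by omega
  let τ : ℕ → ℕ := fun i =>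
    if i = 2^(k+1)-3 then 2^(k+1)-2 else if i = 2^(k+1)-2 then 2^(k+1)-3 else i
  have hτsplit : ∀ i, τ i = if i = 2^(k+1)-3 then 2^(k+1)-2
      else if i = 2^(k+1)-2 then 2^(k+1)-3 else i := fun i => rfl
  have hτmem : ∀ i ∈ levIdx k, τ i ∈ levIdx k := by
    intro i hi
    rw [hτsplit]
    split
    · exact hq2m
    split
    · exact hq1m
    · exact hi
  have hτg : ∀ i, (sib k g).getD i [] = g.getD (τ i) [] := by
    intro i
    rw [getD_sib hk g hglen i, hτsplit]
    by_cases h1 : i = 2^(k+1)-3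
    · rw [if_pos h1, if_pos h1]
    rw [if_neg h1, if_neg h1]
    by_cases h2 : i = 2^(k+1)-2
    · rw [if_pos h2, if_pos h2]
    · rw [if_neg h2, if_neg h2]
  have hτq1 : τ (2^(k+1)-3) = 2^(k+1)-2 := by rw [hτsplit, if_pos rfl]
  have hτq2 : τ (2^(k+1)-2) = 2^(k+1)-3 := by
    rw [hτsplit, if_neg (Ne.symm hq12), if_pos rfl]
  have hτinv : ∀ i, τ (τ i) = i := by
    intro i
    by_cases h1 : i = 2^(k+1)-3
    · rw [h1, hτq1, hτq2]
    by_cases h2 : i = 2^(k+1)-2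
    · rw [h2, hτq2, hτq1]
    · rw [hτsplit i, if_neg h1, if_neg h2, hτsplit i, if_neg h1, if_neg h2]
  have hsl : ∀ i ∈ levIdx k, ((sib k g).getD i []).length = k := by
    intro i hi
    rw [hτg i]
    exact hl _ (hτmem i hi)
  have hsinj : ∀ i ∈ levIdx k, ∀ i' ∈ levIdx k,
      (sib k g).getD i [] = (sib k g).getD i' [] → i = i' := by
    intro i hi i' hi' he
    rw [hτg i, hτg i'] at he
    have h5 := hinj _ (hτmem i hi) _ (hτmem i' hi') he
    have h6 := congrArg τ h5
    rwa [hτinv, hτinv] at h6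
  let f1 : {i // i ∈ levIdx k} → {i // i ∈ levIdx k} :=
    fun i => ⟨encode (g.getD i.1 []), encode_mem_levIdx (hl _ i.2)⟩
  let f2 : {i // i ∈ levIdx k} → {i // i ∈ levIdx k} :=
    fun i => ⟨encode ((sib k g).getD i.1 []), encode_mem_levIdx (hsl _ i.2)⟩
  have hf1inj : Function.Injective f1 := by
    intro i j hij
    exact Subtype.ext (hinj _ i.2 _ j.2 (encode_injective (congrArg Subtype.val hij)))
  have hf2inj : Function.Injective f2 := by
    intro i j hij
    exact Subtype.ext (hsinj _ i.2 _ j.2 (encode_injective (congrArg Subtype.val hij)))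
  let σ1 : Equiv.Perm {i // i ∈ levIdx k} :=
    Equiv.ofBijective f1 (Finite.injective_iff_bijective.mp hf1inj)
  let σ2 : Equiv.Perm {i // i ∈ levIdx k} :=
    Equiv.ofBijective f2 (Finite.injective_iff_bijective.mp hf2inj)
  have hσ1 : ∀ i, (σ1 i).1 = encode (g.getD i.1 []) := fun i => rfl
  have hσ2 : ∀ i, (σ2 i).1 = encode ((sib k g).getD i.1 []) := fun i => rfl
  have hab : σ1 ⟨_, hq1m⟩ ≠ σ1 ⟨_, hq2m⟩ := by
    intro h
    have h5 := σ1.injective h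
    rw [Subtype.ext_iff] at h5
    exact hq12 h5
  have hσ2eq : σ2 = Equiv.swap (σ1 ⟨_, hq1m⟩) (σ1 ⟨_, hq2m⟩) * σ1 := by
    apply Equiv.ext
    intro z
    show f2 z = Equiv.swap (σ1 ⟨_, hq1m⟩) (σ1 ⟨_, hq2m⟩) (f1 z)
    by_cases hz1 : z = ⟨_, hq1m⟩
    · subst hz1
      have he2 : f2 ⟨_, hq1m⟩ = σ1 ⟨_, hq2m⟩ := by
        apply Subtype.ext
        show encode ((sib k g).getD (2^(k+1)-3) []) = (σ1 ⟨_, hq2m⟩).1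
        rw [hτg, hτq1, hσ1]
      rw [he2]
      exact (Equiv.swap_apply_left _ _).symm
    by_cases hz2 : z = ⟨_, hq2m⟩
    · subst hz2
      have he2 : f2 ⟨_, hq2m⟩ = σ1 ⟨_, hq1m⟩ := by
        apply Subtype.ext
        show encode ((sib k g).getD (2^(k+1)-2) []) = (σ1 ⟨_, hq1m⟩).1
        rw [hτg, hτq2, hσ1]
      rw [he2]
      exact (Equiv.swap_apply_right _ _).symm
    · have hne1 : f1 z ≠ σ1 ⟨_, hq1m⟩ := fun h => hz1 (σ1.injective h)
      have hne2 : f1 z ≠ σ1 ⟨_, hq2m⟩ := fun h => hz2 (σ1.injective h)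
      rw [Equiv.swap_apply_of_ne_of_ne hne1 hne2]
      apply Subtype.ext
      show encode ((sib k g).getD z.1 []) = encode (g.getD z.1 [])
      rw [hτg z.1, hτsplit, if_neg (fun h => hz1 (Subtype.ext h)),
        if_neg (fun h => hz2 (Subtype.ext h))]
  have hcard : 2 ≤ Fintype.card {i // i ∈ levIdx k} := by
    have h5 : Fintype.card {i // i ∈ levIdx k} = (levIdx k).card := Fintype.card_coe _
    rw [h5, card_levIdx]
    calc (2:ℕ) = 2^1 := rfl
    _ ≤ 2^k := Nat.pow_le_pow_right (by norm_num) hk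
  have h1 := cycLev_iff_trans hσ1 hcyc
  have h2 := cycLev_iff_trans hσ2 hcyc'
  rw [hσ2eq] at h2
  exact sign_contra hcard σ1 _ _ hab h1 h2

/-! ### transfer between permutations and lists -/

lemma iter_len (π : LPPerm) (j : ℕ) (x : Str) : ((π.toFun)^[j] x).length = x.length := by
  induction j with
  | zero => rfl
  | succ j ih => rw [Function.iterate_succ_apply', π.lenPres, ih]

lemma cycLev_of_entries {π : LPPerm} {k : ℕ} {g : List Str}
    (hg : ∀ i ∈ levIdx k, g.getD i [] = π.toFun (stdEnum i))
    (hc : IsCyclicOnLen π k) : cycLev k g := by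
  intro i hi i' hi'
  have hx : (stdEnum i).length = k := stdEnum_length_of_mem hi
  have hx' : (stdEnum i').length = k := stdEnum_length_of_mem hi'
  obtain ⟨j, hj⟩ := hc _ hx _ hx'
  refine ⟨j, ?_⟩
  have key : ∀ (m : ℕ), (levF k g)^[m] i = encode ((π.toFun)^[m] (stdEnum i)) := by
    intro m
    induction m with
    | zero => simp [encode_stdEnum]
    | succ m ih =>
      rw [Function.iterate_succ_apply', ih, Function.iterate_succ_apply']
      have hzl : ((π.toFun)^[m] (stdEnum i)).length = k := by rw [iter_len]; exact hx
      have hez : encode ((π.toFun)^[m] (stdEnum i)) ∈ levIdx k := encode_mem_levIdx hzl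
      have hgz : g.getD (encode ((π.toFun)^[m] (stdEnum i))) [] =
          π.toFun ((π.toFun)^[m] (stdEnum i)) := by
        rw [hg _ hez, stdEnum_encode]
      have hπl : (π.toFun ((π.toFun)^[m] (stdEnum i))).length = k := by
        rw [π.lenPres]; exact hzl
      unfold levF
      rw [hgz, if_pos ⟨hez, encode_mem_levIdx hπl⟩]
  rw [key j, hj, encode_stdEnum]

lemma entries_len {π : LPPerm} {k : ℕ} {g : List Str}
    (hg : ∀ i ∈ levIdx k, g.getD i [] = π.toFun (stdEnum i)) :
    ∀ i ∈ levIdx k, (g.getD i []).length = k := by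
  intro i hi
  rw [hg i hi, π.lenPres]
  exact stdEnum_length_of_mem hi

lemma entries_inj {π : LPPerm} {k : ℕ} {g : List Str}
    (hg : ∀ i ∈ levIdx k, g.getD i [] = π.toFun (stdEnum i)) :
    ∀ i ∈ levIdx k, ∀ i' ∈ levIdx k, g.getD i [] = g.getD i' [] → i = i' := by
  intro i hi i' hi' he
  rw [hg i hi, hg i' hi'] at he
  exact stdEnum_injective (π.bij.1 he)

lemma restrict_length (π : LPPerm) (N : ℕ) : (π.restrict N).length = N := by
  simp [LPPerm.restrict]

lemma restrict_getD (π : LPPerm) {N i : ℕ} (h : i < N) :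
    (π.restrict N).getD i [] = π.toFun (stdEnum i) := by
  rw [List.getD_eq_getElem _ _ (by rw [restrict_length]; exact h)]
  simp [LPPerm.restrict]

theorem dmart_martingale : IsPermMartingale dmart :=
  ⟨dmart_nonneg, dmart_avg⟩

theorem dmart_succeeds (π : LPPerm) (h : ∀ᶠ n in atTop, IsCyclicOnLen π n) :
    succeedsOn dmart π := by
  obtain ⟨n0, hn0⟩ := eventually_atTop.mp h
  intro C
  rw [frequently_atTop]
  intro a0
  obtain ⟨s, hs⟩ := pow_unbounded_of_one_lt (C / ((1/2:ℝ)^(max n0 1 - 1)))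
    (by norm_num : (1:ℝ) < 3/2)
  set c := max n0 1 with hc
  set t := max a0 (c + s) with ht
  have htc : c + s ≤ t := le_max_right _ _
  have hc1 : 1 ≤ c := le_max_right _ _
  refine ⟨2^(t+1)-1, ?_, ?_⟩
  · have h1 : t + 1 < 2^(t+1) := Nat.lt_two_pow_self
    have h2 : a0 ≤ t := le_max_left _ _
    omega
  · -- evaluate the martingale
    have hRlen : (π.restrict (2^(t+1)-1)).length = 2^(t+1)-1 := restrict_length _ _
    have hpw : (2:ℕ) ≤ 2^(t+1) := by
      calc (2:ℕ) = 2^1 := rfl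
      _ ≤ 2^(t+1) := Nat.pow_le_pow_right (by norm_num) (by omega)
    have hpw2 : (2:ℕ)^(t+1+1) = 2*2^(t+1) := by ring
    have hlog : Nat.log2 ((π.restrict (2^(t+1)-1)).length + 1) = t+1 := by
      rw [hRlen]
      apply log2_eq <;> omega
    have hw : wFac (π.restrict (2^(t+1)-1)) = 1 := by
      unfold wFac
      rw [hlog, hRlen, if_neg (by omega)]
    have hfF : ∀ n' ∈ Finset.Ico c (t+1), fFac n' (π.restrict (2^(t+1)-1)) = 3/2 := by
      intro n' hn'
      rw [Finset.mem_Ico] at hn'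
      have hk1 : 1 ≤ n' := le_trans hc1 hn'.1
      have hpow' : (2:ℕ)^(n'+1) ≤ 2^(t+1) := Nat.pow_le_pow_right (by norm_num) (by omega)
      have hg : ∀ i ∈ levIdx n', (π.restrict (2^(t+1)-1)).getD i [] = π.toFun (stdEnum i) := by
        intro i hi
        rw [mem_levIdx] at hi
        exact restrict_getD π (by omega)
      have hcyc : cycLev n' (π.restrict (2^(t+1)-1)) :=
        cycLev_of_entries hg (hn0 n' (le_trans (le_max_left n0 1) hn'.1))
      have hnot : ¬ cycLev n' (sib n' (π.restrict (2^(t+1)-1))) :=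
        not_cycLev_both hk1 (entries_len hg) (entries_inj hg)
          (by rw [hRlen]; omega) hcyc
      exact fFac_eq_3half hcyc hnot
    rw [dmart, hlog, hw, mul_one, ← Finset.prod_Ico_consecutive _ hc1 (by omega : c ≤ t+1)]
    have hlow : (1/2:ℝ)^(c-1) ≤ ∏ n' ∈ Finset.Ico 1 c, fFac n' (π.restrict (2^(t+1)-1)) := by
      have := Finset.prod_le_prod (s := Finset.Ico 1 c)
        (f := fun _ => (1/2:ℝ)) (g := fun n' => fFac n' (π.restrict (2^(t+1)-1)))
        (fun _ _ => by norm_num) (fun n' _ => fFac_ge_half _ _)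
      rwa [Finset.prod_const, Nat.card_Ico] at this
    have hhigh : ∏ n' ∈ Finset.Ico c (t+1), fFac n' (π.restrict (2^(t+1)-1))
        = (3/2:ℝ)^(t+1-c) := by
      rw [Finset.prod_congr rfl hfF, Finset.prod_const, Nat.card_Ico]
    rw [hhigh]
    have hCs : C < (1/2:ℝ)^(c-1) * (3/2)^s := by
      rw [div_lt_iff₀ (by positivity)] at hs
      calc C < (3/2:ℝ)^s * (1/2)^(c-1) := hs
      _ = (1/2:ℝ)^(c-1) * (3/2)^s := by ring
    calc C < (1/2:ℝ)^(c-1) * (3/2)^s := hCs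
    _ ≤ (1/2:ℝ)^(c-1) * (3/2)^(t+1-c) := by
        apply mul_le_mul_of_nonneg_left _ (by positivity)
        apply pow_le_pow_right₀ (by norm_num)
        omega
    _ ≤ (∏ n' ∈ Finset.Ico 1 c, fFac n' (π.restrict (2^(t+1)-1))) * (3/2)^(t+1-c) := by
        apply mul_le_mul_of_nonneg_right hlow (by positivity)
/-! ### helpers for the measure argument -/

lemma ofFn_getD {L : ℕ} (f : Fin L → Str) {i : ℕ} (h : i < L) :
    (List.ofFn f).getD i [] = f ⟨i, h⟩ := by
  rw [List.getD_eq_getElem _ _ (by simpa using h)]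
  simp

lemma ofFn_getD_self {L : ℕ} (l : List Str) (hl : l.length = L) :
    List.ofFn (fun i : Fin L => l.getD i []) = l := by
  apply List.ext_getElem (by simpa using hl.symm)
  intro i h1 h2
  rw [List.getElem_ofFn]
  exact (List.getD_eq_getElem l [] h2)

def levTau (k : ℕ) : ℕ → ℕ := fun i =>
  if i = 2^(k+1)-3 then 2^(k+1)-2 else if i = 2^(k+1)-2 then 2^(k+1)-3 else i

lemma levTau_def (k i : ℕ) : levTau k i =
    if i = 2^(k+1)-3 then 2^(k+1)-2 else if i = 2^(k+1)-2 then 2^(k+1)-3 else i := rfl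

lemma four_le_pow {k : ℕ} (hk : 1 ≤ k) : 4 ≤ 2^(k+1) := by
  calc (4:ℕ) = 2^2 := rfl
  _ ≤ 2^(k+1) := Nat.pow_le_pow_right (by norm_num) (by omega)

lemma getD_sib_tau {k : ℕ} (hk : 1 ≤ k) (g : List Str) (hglen : 2^(k+1)-2 < g.length) :
    ∀ i, (sib k g).getD i [] = g.getD (levTau k i) [] := by
  intro i
  rw [getD_sib hk g hglen i, levTau_def]
  by_cases h1 : i = 2^(k+1)-3
  · rw [if_pos h1, if_pos h1]
  rw [if_neg h1, if_neg h1]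
  by_cases h2 : i = 2^(k+1)-2
  · rw [if_pos h2, if_pos h2]
  · rw [if_neg h2, if_neg h2]

lemma levTau_invol {k : ℕ} (hk : 1 ≤ k) (i : ℕ) : levTau k (levTau k i) = i := by
  have h4 := four_le_pow hk
  have hq12 : 2^(k+1)-3 ≠ 2^(k+1)-2 := by omega
  have e1 : levTau k (2^(k+1)-3) = 2^(k+1)-2 := by rw [levTau_def, if_pos rfl]
  have e2 : levTau k (2^(k+1)-2) = 2^(k+1)-3 := by
    rw [levTau_def, if_neg (Ne.symm hq12), if_pos rfl]
  by_cases h1 : i = 2^(k+1)-3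
  · rw [h1, e1, e2]
  by_cases h2 : i = 2^(k+1)-2
  · rw [h2, e2, e1]
  · have e3 : levTau k i = i := by rw [levTau_def, if_neg h1, if_neg h2]
    rw [e3, e3]

lemma levTau_mem {k : ℕ} (hk : 1 ≤ k) {i : ℕ} (hi : i ∈ levIdx k) : levTau k i ∈ levIdx k := by
  obtain ⟨hq1, hq2⟩ := q1_mem_levIdx hk
  rw [levTau_def]
  split
  · exact hq2
  split
  · exact hq1
  · exact hi

lemma levTau_lt {k M : ℕ} (hM : 2^(k+1)-2 < M) {i : ℕ} (hi : i < M) : levTau k i < M := by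
  rw [levTau_def]
  split
  · omega
  split
  · omega
  · exact hi

lemma levTau_fix {k : ℕ} (hk : 1 ≤ k) {i : ℕ} (hi : i ∉ levIdx k) : levTau k i = i := by
  obtain ⟨hq1, hq2⟩ := q1_mem_levIdx hk
  rw [levTau_def]
  rw [if_neg (fun h => hi (by rw [h]; exact hq1)), if_neg (fun h => hi (by rw [h]; exact hq2))]

lemma sib_sib {k : ℕ} (hk : 1 ≤ k) (g : List Str) (hglen : 2^(k+1)-2 < g.length) :
    sib k (sib k g) = g := by
  have hglen2 : 2^(k+1)-2 < (sib k g).length := by rw [length_sib]; exact hglen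
  apply List.ext_getElem (by rw [length_sib, length_sib])
  intro i h1 h2
  rw [← List.getD_eq_getElem _ [] h1, ← List.getD_eq_getElem _ [] h2,
    getD_sib_tau hk _ hglen2, getD_sib_tau hk _ hglen, levTau_invol hk]

lemma ppp_entries_len {g : List Str} (hg : IsPPP g) {k : ℕ} (h : 2^(k+1)-1 ≤ g.length) :
    ∀ i ∈ levIdx k, (g.getD i []).length = k := by
  intro i hi
  have hi2 := mem_levIdx.mp hi
  have hil : i < g.length := by omega
  rw [List.getD_eq_getElem _ _ hil]
  have h5 := hg.2 i hil
  rw [List.get_eq_getElem] at h5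
  rw [h5]
  exact stdEnum_length_of_mem hi

lemma ppp_entries_inj {g : List Str} (hg : IsPPP g) {k : ℕ} (h : 2^(k+1)-1 ≤ g.length) :
    ∀ i ∈ levIdx k, ∀ i' ∈ levIdx k, g.getD i [] = g.getD i' [] → i = i' := by
  intro i hi i' hi' he
  have hi2 := mem_levIdx.mp hi
  have hi2' := mem_levIdx.mp hi'
  have hil : i < g.length := by omega
  have hil' : i' < g.length := by omega
  rw [List.getD_eq_getElem _ _ hil, List.getD_eq_getElem _ _ hil'] at he
  exact hg.1.getElem_inj_iff.mp he

lemma isPPP_sib {g : List Str} (hg : IsPPP g) {k : ℕ} (hk : 1 ≤ k)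
    (hglen : 2^(k+1)-2 < g.length) : IsPPP (sib k g) := by
  have hlen : (sib k g).length = g.length := length_sib k g
  have hstd : ∀ i, i < g.length → (g.getD (levTau k i) []).length = (stdEnum i).length := by
    intro i hil
    by_cases hmem : i ∈ levIdx k
    · have hm2 := levTau_mem hk hmem
      have hl2 : levTau k i < g.length := levTau_lt hglen hil
      rw [List.getD_eq_getElem _ _ hl2]
      have h5 := hg.2 _ hl2
      rw [List.get_eq_getElem] at h5
      rw [h5, stdEnum_length_of_mem hm2, stdEnum_length_of_mem hmem]
    · rw [levTau_fix hk hmem, List.getD_eq_getElem _ _ hil]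
      have h5 := hg.2 _ hil
      rw [List.get_eq_getElem] at h5
      rw [h5]
  constructor
  · rw [List.nodup_iff_injective_get]
    intro u v huv
    rw [List.get_eq_getElem, List.get_eq_getElem] at huv
    have hu : (u : ℕ) < g.length := by have := u.2; omega
    have hv : (v : ℕ) < g.length := by have := v.2; omega
    rw [← List.getD_eq_getElem _ [] u.2, ← List.getD_eq_getElem _ [] v.2,
      getD_sib_tau hk _ hglen, getD_sib_tau hk _ hglen] at huv
    have htu : levTau k u < g.length := levTau_lt hglen hu
    have htv : levTau k v < g.length := levTau_lt hglen hv
    rw [List.getD_eq_getElem _ _ htu, List.getD_eq_getElem _ _ htv] at huv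
    have h6 := hg.1.getElem_inj_iff.mp huv
    have h7 := congrArg (levTau k) h6
    rw [levTau_invol hk, levTau_invol hk] at h7
    exact Fin.ext h7
  · intro i hil
    rw [List.get_eq_getElem, ← List.getD_eq_getElem _ [] hil, getD_sib_tau hk _ hglen]
    exact hstd i (by omega)

lemma cyl_measurable {g : List Str} (hg : IsPPP g) : MeasurableSet (cyl g) :=
  MeasurableSpace.measurableSet_generateFrom ⟨g, hg, rfl⟩

lemma cyl_disjoint {g g' : List Str} (hlen : g.length = g'.length) (hne : g ≠ g') :
    Disjoint (cyl g) (cyl g') := by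
  rw [Set.disjoint_left]
  intro π hπ hπ'
  apply hne
  apply List.ext_get hlen
  intro i h1 h2
  rw [← hπ i h1, ← hπ' i h2]

lemma muPPP_congr {g g' : List Str} (h : g.length = g'.length) : muPPP g = muPPP g' := by
  unfold muPPP
  rw [h]
/-! ### the measure-zero argument -/

theorem measure_tail_zero (μ : Measure LPPerm) (hprob : IsProbabilityMeasure μ)
    (hμ : ∀ g, IsPPP g → μ (cyl g) = ENNReal.ofReal (muPPP g)) (n0 : ℕ) :
    μ {π : LPPerm | ∀ n, n0 ≤ n → IsCyclicOnLen π n} = 0 := by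
  classical
  set c := max n0 1 with hc
  have hc1 : 1 ≤ c := le_max_right _ _
  have hcn0 : n0 ≤ c := le_max_left _ _
  set E := {π : LPPerm | ∀ n, n0 ≤ n → IsCyclicOnLen π n} with hE
  have key : ∀ N, c ≤ N → μ E * (2:ENNReal)^(N+1-c) ≤ 1 := by
    intro N hN
    have hpowL : (2:ℕ) ≤ 2^(N+1) := by
      calc (2:ℕ) = 2^1 := rfl
      _ ≤ _ := Nat.pow_le_pow_right (by norm_num) (by omega)
    set L := 2^(N+1) - 1 with hL
    set SN : Finset Str := (Finset.range (N+1)).biUnion strsOfLen with hSN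
    set S : Finset (Fin L → Str) := Fintype.piFinset (fun _ => SN) with hS
    set U : ℕ → Finset (Fin L → Str) := fun j => S.filter
      (fun f => IsPPP (List.ofFn f) ∧ ∀ k ∈ Finset.Ico c j, cycLev k (List.ofFn f)) with hU
    have hlenofFn : ∀ f : Fin L → Str, (List.ofFn f).length = L := fun f => List.length_ofFn
    -- covering
    have hcover : E ⊆ ⋃ f ∈ U (N+1), cyl (List.ofFn f) := by
      intro π hπ
      set f : Fin L → Str := fun i => π.toFun (stdEnum i) with hf
      have hgetD : ∀ i, ∀ _ : i < L, (List.ofFn f).getD i [] = π.toFun (stdEnum i) := by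
        intro i h
        rw [ofFn_getD f h]
      have hPPP : IsPPP (List.ofFn f) := by
        constructor
        · rw [List.nodup_ofFn]
          intro u v huv
          exact Fin.ext (stdEnum_injective (π.bij.1 huv))
        · intro i hil
          have hil' : i < L := by rw [hlenofFn] at hil; exact hil
          rw [List.get_eq_getElem, ← List.getD_eq_getElem _ [] hil, hgetD i hil', π.lenPres]
      have hfS : f ∈ S := by
        rw [hS, Fintype.mem_piFinset]
        intro i
        obtain ⟨hlb1, hlb2⟩ := log2_bounds (i : ℕ)
        have hi1 : (i:ℕ) + 1 < 2^(N+1) := by have := i.2; omega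
        have hlogle : Nat.log2 ((i:ℕ)+1) ≤ N := by
          by_contra hcon
          push_neg at hcon
          have : (2:ℕ)^(N+1) ≤ 2^(Nat.log2 ((i:ℕ)+1)) :=
            Nat.pow_le_pow_right (by norm_num) hcon
          omega
        rw [hSN, Finset.mem_biUnion]
        refine ⟨Nat.log2 ((i:ℕ)+1), Finset.mem_range.mpr (by omega), mem_strsOfLen.mpr ?_⟩
        show (π.toFun (stdEnum (i:ℕ))).length = _
        rw [π.lenPres]
        exact length_stdEnum _
      have hcyc : ∀ k ∈ Finset.Ico c (N+1), cycLev k (List.ofFn f) := by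
        intro k hk
        rw [Finset.mem_Ico] at hk
        apply cycLev_of_entries (π := π)
        · intro i hi
          have hi2 := mem_levIdx.mp hi
          have hpk : (2:ℕ)^(k+1) ≤ 2^(N+1) := Nat.pow_le_pow_right (by norm_num) (by omega)
          exact hgetD i (by omega)
        · exact hπ k (le_trans hcn0 hk.1)
      refine Set.mem_iUnion₂.mpr ⟨f, ?_, ?_⟩
      · rw [hU]
        exact Finset.mem_filter.mpr ⟨hfS, hPPP, hcyc⟩
      · intro i hil
        have hil' : i < L := by rw [hlenofFn] at hil; exact hil
        rw [List.get_eq_getElem, ← List.getD_eq_getElem _ [] hil]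
        exact (hgetD i hil').symm
    -- the common cylinder measure
    set v : ENNReal := ENNReal.ofReal (muPPP (List.ofFn (fun _ : Fin L => ([] : Str)))) with hv
    have hμv : ∀ f : Fin L → Str, IsPPP (List.ofFn f) → μ (cyl (List.ofFn f)) = v := by
      intro f hf
      rw [hμ _ hf, hv, muPPP_congr (g := List.ofFn f)
        (g' := List.ofFn (fun _ : Fin L => ([] : Str)))
        (by rw [hlenofFn f, hlenofFn (fun _ : Fin L => ([] : Str))])]
    have hEbound : μ E ≤ (U (N+1)).card • v := by
      calc μ E ≤ μ (⋃ f ∈ U (N+1), cyl (List.ofFn f)) := measure_mono hcover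
      _ ≤ ∑ f ∈ U (N+1), μ (cyl (List.ofFn f)) := measure_biUnion_finset_le _ _
      _ = ∑ _f ∈ U (N+1), v := Finset.sum_congr rfl
          (fun f hf => hμv f (Finset.mem_filter.mp hf).2.1)
      _ = (U (N+1)).card • v := Finset.sum_const v
    have hbase : (U c).card • v ≤ 1 := by
      have hdisj : (↑(U c) : Set (Fin L → Str)).PairwiseDisjoint
          (fun f => cyl (List.ofFn f)) := by
        intro f _ f' _ hne
        exact cyl_disjoint (by rw [hlenofFn, hlenofFn])
          (fun h => hne (List.ofFn_injective h))
      have hms : ∀ f ∈ U c, MeasurableSet (cyl (List.ofFn f)) :=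
        fun f hf => cyl_measurable (Finset.mem_filter.mp hf).2.1
      have hμeq := measure_biUnion_finset (μ := μ) hdisj hms
      calc (U c).card • v = ∑ _f ∈ U c, v := (Finset.sum_const v).symm
      _ = ∑ f ∈ U c, μ (cyl (List.ofFn f)) := Finset.sum_congr rfl
          (fun f hf => (hμv f (Finset.mem_filter.mp hf).2.1).symm)
      _ = μ (⋃ f ∈ U c, cyl (List.ofFn f)) := hμeq.symm
      _ ≤ 1 := prob_le_one
    -- doubling step
    have hstep : ∀ j, c ≤ j → j ≤ N → 2 * (U (j+1)).card ≤ (U j).card := by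
      intro j hcj hjN
      have hk1 : 1 ≤ j := le_trans hc1 hcj
      have hpj : (2:ℕ)^(j+1) ≤ 2^(N+1) := Nat.pow_le_pow_right (by norm_num) (by omega)
      set sf : (Fin L → Str) → (Fin L → Str) :=
        fun f i => (sib j (List.ofFn f)).getD i [] with hsf
      have hofFn_sf : ∀ f : Fin L → Str, List.ofFn (sf f) = sib j (List.ofFn f) := by
        intro f
        apply ofFn_getD_self
        rw [length_sib, hlenofFn]
      have hglenf : ∀ f : Fin L → Str, 2^(j+1)-2 < (List.ofFn f).length := by
        intro f
        rw [hlenofFn]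
        omega
      have hsub1 : U (j+1) ⊆ U j := by
        intro f hf
        rw [hU, Finset.mem_filter] at hf ⊢
        refine ⟨hf.1, hf.2.1, fun k hk => ?_⟩
        rw [Finset.mem_Ico] at hk
        exact hf.2.2 k (Finset.mem_Ico.mpr ⟨hk.1, by omega⟩)
      have hsub2 : (U (j+1)).image sf ⊆ U j := by
        intro f' hf'
        rw [Finset.mem_image] at hf'
        obtain ⟨f, hf, rfl⟩ := hf'
        rw [hU, Finset.mem_filter] at hf
        obtain ⟨hfS, hfP, hfC⟩ := hf
        rw [hU, Finset.mem_filter]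
        refine ⟨?_, ?_, ?_⟩
        · rw [hS, Fintype.mem_piFinset]
          intro i
          show (sib j (List.ofFn f)).getD (i:ℕ) [] ∈ SN
          rw [getD_sib_tau hk1 _ (hglenf f)]
          have hlt : levTau j (i : ℕ) < L := levTau_lt (by omega) i.2
          rw [ofFn_getD f hlt]
          rw [hS] at hfS
          exact Fintype.mem_piFinset.mp hfS _
        · rw [hofFn_sf]
          exact isPPP_sib hfP hk1 (hglenf f)
        · intro k hk
          rw [Finset.mem_Ico] at hk
          rw [hofFn_sf]
          have hcong : ∀ i ∈ levIdx k,
              (sib j (List.ofFn f)).getD i [] = (List.ofFn f).getD i [] := by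
            intro i hi
            rw [getD_sib_tau hk1 _ (hglenf f)]
            congr 1
            apply levTau_fix hk1
            intro hmem
            have h1 := mem_levIdx.mp hi
            have h2 := mem_levIdx.mp hmem
            have h3 : (2:ℕ)^(k+1) ≤ 2^j := Nat.pow_le_pow_right (by norm_num) (by omega)
            have hj1 : (1:ℕ) ≤ 2^j := two_pow_pos' j
            omega
          exact (cycLev_congr hcong).mpr (hfC k (Finset.mem_Ico.mpr ⟨hk.1, by omega⟩))
      have hinjsf : Set.InjOn sf (U (j+1)) := by
        intro f1 _ f2 _ he
        have e1 := congrArg List.ofFn he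
        rw [hofFn_sf, hofFn_sf] at e1
        have e2 := congrArg (sib j) e1
        rw [sib_sib hk1 _ (hglenf f1), sib_sib hk1 _ (hglenf f2)] at e2
        exact List.ofFn_injective e2
      have hdisj2 : Disjoint (U (j+1)) ((U (j+1)).image sf) := by
        rw [Finset.disjoint_left]
        intro f hf hf'
        rw [Finset.mem_image] at hf'
        obtain ⟨f0, hf0, hval⟩ := hf'
        rw [hU, Finset.mem_filter] at hf hf0
        have hcyc0 : cycLev j (List.ofFn f0) :=
          hf0.2.2 j (Finset.mem_Ico.mpr ⟨hcj, by omega⟩)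
        have hcyc1 : cycLev j (List.ofFn f) :=
          hf.2.2 j (Finset.mem_Ico.mpr ⟨hcj, by omega⟩)
        have heq : List.ofFn f = sib j (List.ofFn f0) := by rw [← hval, hofFn_sf]
        exact not_cycLev_both hk1
          (ppp_entries_len hf0.2.1 (by rw [hlenofFn]; omega))
          (ppp_entries_inj hf0.2.1 (by rw [hlenofFn]; omega))
          (hglenf f0) hcyc0 (heq ▸ hcyc1)
      have hcardim : ((U (j+1)).image sf).card = (U (j+1)).card :=
        Finset.card_image_of_injOn hinjsf
      have hle := Finset.card_le_card (Finset.union_subset hsub1 hsub2)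
      rw [Finset.card_union_of_disjoint hdisj2, hcardim] at hle
      omega
    have hiter : ∀ m, m ≤ N+1-c → (U (N+1)).card * 2^m ≤ (U (N+1-m)).card := by
      intro m
      induction m with
      | zero => intro _; simp
      | succ m ih =>
        intro hm
        have hj : c ≤ N - m := by omega
        have ih' := ih (by omega)
        calc (U (N+1)).card * 2^(m+1) = 2 * ((U (N+1)).card * 2^m) := by ring
        _ ≤ 2 * (U (N+1-m)).card := by omega
        _ = 2 * (U ((N-m)+1)).card := by rw [show N+1-m = (N-m)+1 by omega]
        _ ≤ (U (N-m)).card := hstep (N-m) hj (by omega)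
        _ = (U (N+1-(m+1))).card := by rw [show N+1-(m+1) = N-m by omega]
    have hfin := hiter (N+1-c) (le_refl _)
    rw [show N+1-(N+1-c) = c by omega] at hfin
    have hcast : ((2:ENNReal))^(N+1-c) = ((2^(N+1-c) : ℕ) : ENNReal) := by push_cast; rfl
    calc μ E * (2:ENNReal)^(N+1-c) ≤ ((U (N+1)).card • v) * (2:ENNReal)^(N+1-c) :=
        mul_le_mul_left hEbound _
    _ = (((U (N+1)).card * 2^(N+1-c) : ℕ) : ENNReal) * v := by
        rw [nsmul_eq_mul, hcast]
        push_cast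
        ring
    _ ≤ (((U c).card : ℕ) : ENNReal) * v := mul_le_mul_left (by exact_mod_cast hfin) v
    _ ≤ 1 := by
        rw [← nsmul_eq_mul]
        exact hbase
  -- conclude
  by_contra hne
  obtain ⟨m, hm⟩ := ENNReal.exists_inv_two_pow_lt hne
  have hb := key (c + m) (by omega)
  rw [show c+m+1-c = m+1 by omega] at hb
  have h2 : μ E ≤ ((2:ENNReal)^(m+1))⁻¹ := by
    rw [ENNReal.le_inv_iff_mul_le]
    exact hb
  have h3 : ((2:ENNReal)^(m+1))⁻¹ = (2⁻¹:ENNReal)^(m+1) :=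
    ENNReal.inv_pow
  have h4 : (2⁻¹:ENNReal)^(m+1) ≤ 2⁻¹^m := by
    rw [pow_succ]
    calc (2⁻¹:ENNReal)^m * 2⁻¹ ≤ 2⁻¹^m * 1 :=
        mul_le_mul_right (ENNReal.inv_le_one.mpr one_le_two) _
    _ = 2⁻¹^m := mul_one _
  exact absurd (lt_of_le_of_lt (h2.trans (h3 ▸ h4)) hm) (lt_irrefl _)
/-- there is a permutation martingale succeeding on every `π ∈ Π` whose
restriction to `{0,1}^n` is a cyclic permutation for all but finitely many `n`; consequently
the set of such permutations has outer measure 0 under `μ`. -/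
theorem stmt10 (μ : Measure LPPerm) (hprob : IsProbabilityMeasure μ)
    (hμ : ∀ g, IsPPP g → μ (cyl g) = ENNReal.ofReal (muPPP g)) :
    (∃ d : List Str → ℝ, IsPermMartingale d ∧
      ∀ π : LPPerm, (∀ᶠ n in atTop, IsCyclicOnLen π n) → succeedsOn d π) ∧
    μ {π : LPPerm | ∀ᶠ n in atTop, IsCyclicOnLen π n} = 0 := by
  constructor
  · exact ⟨dmart, dmart_martingale, fun π h => dmart_succeeds π h⟩
  · have hsub : {π : LPPerm | ∀ᶠ n in atTop, IsCyclicOnLen π n} ⊆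
        ⋃ n0 : ℕ, {π : LPPerm | ∀ n, n0 ≤ n → IsCyclicOnLen π n} := by
      intro π hπ
      obtain ⟨n0, hn0⟩ := eventually_atTop.mp hπ
      exact Set.mem_iUnion.mpr ⟨n0, hn0⟩
    exact measure_mono_null hsub
      (measure_iUnion_null (fun n0 => measure_tail_zero μ hprob hμ n0))
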